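/- Let ψ : ∂D_a → ℂ be continuous with |ψ| = 1 and winding number deg(ψ,a) = 2n+1 odd. Let ψ̃ be the (symmetric) lift of ψ to the boundary of the double cover Σ_a of D_a. Then ψ̃ has winding number 2(2n+1), there exists a continuous antisymmetric function ψ^{1/2} on ∂Σ_a with (ψ^{1/2})² = ψ̃, and for any Γ : ∂D → ℂ satisfying Γ = ψ Γ̄, the lifted function ψ^{-1/2}·Γ̃ is real-valued and antisymmetric on ∂Σ_a. -/

import Mathlib

open Metric Complex

/-- The boundary of the double cover Σ_a = {(x,y) : y² = x-a} of the punctured disk: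
points with y² = x - a and |x| = 1. -/
def bdrySigma (a : ℂ) : Set (ℂ × ℂ) :=
  {p : ℂ × ℂ | p.2 ^ 2 = p.1 - a ∧ ‖p.1‖ = 1}

/-!
Write `ψ (exp (2πit)) = exp (i h t)` with `h` continuous. Since `ψ` is single-valued on the
circle, `h (t + 1) - h t` is a continuous function with values in `2πℤ`, hence the constant
`2π(2n+1)`; along the parametrization `γ`, which covers the circle twice, `ψ̃` therefore winds
`2(2n+1)` times. The square root `k t = exp (i h t / 2)` then satisfies `k (t + 1) = -k t`, the same
sign change as the `y`-coordinate of `γ`, which never vanishes because `a` lies inside the disk.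
So `k` is constant on the fibres of `γ` and descends to a continuous function on `∂Σ_a`, because
`γ` restricted to a period is a quotient map. The deck transformation is `t ↦ t + 1`, which gives
antisymmetry. Finally `|s| = 1` and `Γ = s² Γ̄` make `s⁻¹ Γ` equal to its own conjugate.
-/

open Function Set Real

theorem Function.FactorsThrough.continuousOn_extend {Y Z : Type*} [TopologicalSpace Y]
    [T2Space Y] [TopologicalSpace Z] {γ : ℝ → Y} {k : ℝ → Z} {c : ℝ} (hc : 0 < c)
    (hγ : Continuous γ) (hγper : Periodic γ c) (hk : Continuous k) (hfac : k.FactorsThrough γ)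
    (e : Y → Z) : ContinuousOn (extend γ k e) (range γ) := by
  let q : Icc 0 c → range γ := fun t => ⟨γ t, t, rfl⟩
  have hq : Topology.IsQuotientMap q := by
    have hqc : Continuous q := (hγ.comp continuous_subtype_val).subtype_mk _
    refine hqc.isClosedMap.isQuotientMap hqc ?_
    rintro ⟨_, t, rfl⟩
    obtain ⟨s, hs, hst⟩ : γ t ∈ γ '' Icc 0 (0 + c) := hγper.image_Icc hc 0 ▸ mem_range_self t
    exact ⟨⟨s, by simpa using hs⟩, Subtype.ext hst⟩
  rw [continuousOn_iff_continuous_domRestrict, hq.continuous_iff]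
  have hcomp : domRestrict (range γ) (extend γ k e) ∘ q = k ∘ Subtype.val :=
    funext fun t => hfac.extend_apply e t
  rw [hcomp]
  exact hk.comp continuous_subtype_val

theorem exists_int_eq_add_mul_two_pi_of_cexp_eq {x y : ℝ}
    (h : Complex.exp (I * x) = Complex.exp (I * y)) : ∃ m : ℤ, x = y + m * (2 * π) := by
  rw [mul_comm I, mul_comm I] at h
  exact Circle.exp_eq_exp.1 (Subtype.ext (by simpa [Circle.coe_exp]))

theorem Continuous.sub_eq_of_periodic_cexp {h : ℝ → ℝ} (hh : Continuous h) {c : ℝ}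
    (hper : Periodic (fun t => Complex.exp (I * h t)) c) (t : ℝ) :
    h (t + c) - h t = h c - h 0 := by
  have hdisc : IsDiscrete (AddSubgroup.zmultiples (2 * π) : Set ℝ) :=
    isDiscrete_iff_discreteTopology.2
      (inferInstanceAs (DiscreteTopology (AddSubgroup.zmultiples (2 * π))))
  have hmaps : MapsTo (fun t => h (t + c) - h t) univ (AddSubgroup.zmultiples (2 * π)) := by
    intro s _
    obtain ⟨m, hm⟩ := exists_int_eq_add_mul_two_pi_of_cexp_eq (hper s)
    exact ⟨m, by simp [hm]⟩
  simpa using isPreconnected_univ.constant_of_mapsTo hdisc (by fun_prop) hmaps (mem_univ t)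
    (mem_univ 0)

theorem Function.FactorsThrough.of_antiperiodic {α : Type*} {k : ℝ → ℂ} {γ : ℝ → α × ℂ}
    (hk : Antiperiodic k 1) (hγ₂ : Antiperiodic (fun t => (γ t).2) 1) (hγ₂0 : ∀ t, (γ t).2 ≠ 0)
    (hγ₁ : ∀ t t', (γ t).1 = (γ t').1 → ∃ m : ℤ, t' = t + m) : k.FactorsThrough γ := by
  intro t t' he
  obtain ⟨m, rfl⟩ := hγ₁ t t' (congrArg Prod.fst he)
  have hy := hγ₂.add_int_mul_eq (x := t) m
  have hkm := hk.add_int_mul_eq (x := t) m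
  simp only [mul_one] at hy hkm
  have hsign : ((m.negOnePow : ℤ) : ℂ) = 1 :=
    mul_right_cancel₀ (hγ₂0 t) (by rw [← hy, ← he, one_mul])
  rw [hkm, hsign, one_mul]

theorem exists_int_eq_add_of_cexp_two_pi_eq {t t' : ℝ}
    (h : Complex.exp (2 * π * I * t) = Complex.exp (2 * π * I * t')) : ∃ m : ℤ, t' = t + m := by
  obtain ⟨m, hm⟩ := exists_int_eq_add_mul_two_pi_of_cexp_eq (x := 2 * π * t') (y := 2 * π * t)
    (by convert h.symm using 2 <;> push_cast <;> ring)
  exact ⟨m, by nlinarith [pi_pos]⟩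

theorem exists_cexp_two_pi_eq {x : ℂ} (hx : ‖x‖ = 1) :
    ∃ t : ℝ, Complex.exp (2 * π * I * t) = x := by
  obtain ⟨θ, hθ⟩ := Circle.exp_surjective ⟨x, mem_sphere_zero_iff_norm.2 hx⟩
  refine ⟨θ / (2 * π), ?_⟩
  have hθx : Complex.exp (θ * I) = x := by simpa [Circle.coe_exp] using congrArg Subtype.val hθ
  rw [← hθx]
  congr 1
  push_cast
  field_simp

theorem snd_ne_zero_of_mem_bdrySigma {a : ℂ} (ha : a ∈ ball (0 : ℂ) 1) {p : ℂ × ℂ}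
    (hp : p ∈ bdrySigma a) : p.2 ≠ 0 := by
  intro h0
  have hpa : p.1 = a := by linear_combination -hp.1 + h0 * p.2
  have : ‖a‖ < 1 := by simpa using ha
  exact this.ne (hpa ▸ hp.2)

theorem snd_eq_or_eq_neg_of_mem_bdrySigma {a : ℂ} {p q : ℂ × ℂ} (hp : p ∈ bdrySigma a)
    (hq : q ∈ bdrySigma a) (h1 : p.1 = q.1) : p.2 = q.2 ∨ p.2 = -q.2 := by
  apply sq_eq_sq_iff_eq_or_eq_neg.1
  rw [hp.1, hq.1, h1]

theorem range_eq_bdrySigma {a : ℂ} {γ : ℝ → ℂ × ℂ} (hγS : ∀ t, γ t ∈ bdrySigma a)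
    (hγdeck : ∀ t, γ (t + 1) = ((γ t).1, -(γ t).2))
    (hγproj : ∀ t, (γ t).1 = Complex.exp (2 * π * I * t)) :
    range γ = bdrySigma a := by
  refine (range_subset_iff.2 hγS).antisymm fun p hp => ?_
  obtain ⟨t, ht⟩ := exists_cexp_two_pi_eq hp.2
  have h1 : (γ t).1 = p.1 := by rw [hγproj, ht]
  rcases snd_eq_or_eq_neg_of_mem_bdrySigma (hγS t) hp h1 with h2 | h2
  · exact ⟨t, Prod.ext h1 h2⟩
  · exact ⟨t + 1, by rw [hγdeck]; exact Prod.ext h1 (by rw [h2, neg_neg])⟩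

theorem antiperiodic_cexp_half_of_add_odd_mul_two_pi {h : ℝ → ℝ} {c : ℝ} {n : ℤ}
    (hh : ∀ t, h (t + c) = h t + 2 * π * (2 * n + 1)) :
    Antiperiodic (fun t => Complex.exp (↑(h t / 2) * I)) c := fun t => by
  dsimp only
  rw [hh, show (↑((h t + 2 * π * (2 * n + 1)) / 2) * I : ℂ)
      = ↑(h t / 2) * I + ((2 * n + 1 : ℤ) : ℂ) * (π * I) by push_cast; ring,
    Complex.exp_add, Complex.exp_int_mul, exp_pi_mul_I, (odd_two_mul_add_one n).neg_one_zpow,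
    mul_neg_one]

theorem im_inv_mul_eq_zero_of_eq_sq_mul_conj {u z : ℂ} (hu : ‖u‖ = 1)
    (hz : z = u ^ 2 * (starRingEnd ℂ) z) : (u⁻¹ * z).im = 0 := by
  have hu0 : u ≠ 0 := norm_ne_zero_iff.1 (by rw [hu]; norm_num)
  rw [← conj_eq_iff_im, map_mul, map_inv₀, ← inv_eq_conj hu, inv_inv]
  conv_rhs => rw [hz]
  field_simp

theorem half_integer_square_root_general (a : ℂ) (ha : a ∈ ball (0 : ℂ) 1) (n : ℤ)
    (ψ : ℂ → ℂ)
    (hdeg : ∃ h : ℝ → ℝ, Continuous h ∧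
      (∀ t : ℝ, ψ (Complex.exp (2 * Real.pi * Complex.I * t)) = Complex.exp (Complex.I * h t)) ∧
      h 1 - h 0 = 2 * Real.pi * (2 * n + 1))
    (γ : ℝ → ℂ × ℂ) (hγc : Continuous γ) (hγS : ∀ t, γ t ∈ bdrySigma a)
    (hγdeck : ∀ t, γ (t + 1) = ((γ t).1, -(γ t).2))
    (hγproj : ∀ t, (γ t).1 = Complex.exp (2 * Real.pi * Complex.I * t)) :
    (∃ H : ℝ → ℝ, Continuous H ∧
      (∀ t : ℝ, ψ ((γ t).1) = Complex.exp (Complex.I * H t)) ∧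
      H 2 - H 0 = 2 * Real.pi * (2 * (2 * n + 1))) ∧
    ∃ s : ℂ × ℂ → ℂ, ContinuousOn s (bdrySigma a) ∧
      (∀ p ∈ bdrySigma a, (s p) ^ 2 = ψ p.1) ∧
      (∀ p ∈ bdrySigma a, s (p.1, -p.2) = -s p) ∧
      (∀ Γ : ℂ → ℂ, (∀ x ∈ sphere (0 : ℂ) 1, Γ x = ψ x * (starRingEnd ℂ) (Γ x)) →
        ∀ p ∈ bdrySigma a,
          ((s p)⁻¹ * Γ p.1).im = 0 ∧
          (s (p.1, -p.2))⁻¹ * Γ p.1 = -((s p)⁻¹ * Γ p.1)) := by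
  obtain ⟨h, hhc, hval, hΔ⟩ := hdeg
  have hψγ (t : ℝ) : ψ (γ t).1 = Complex.exp (I * h t) := by rw [hγproj, hval]
  have hstep (t : ℝ) : h (t + 1) = h t + 2 * π * (2 * n + 1) := by
    have := hhc.sub_eq_of_periodic_cexp (c := 1) (fun t => by simp only [← hψγ, hγdeck]) t
    linarith
  let k (t : ℝ) : ℂ := Complex.exp (↑(h t / 2) * I)
  have hk : Antiperiodic k 1 := antiperiodic_cexp_half_of_add_odd_mul_two_pi hstep
  have hfac : k.FactorsThrough γ :=
    .of_antiperiodic hk (fun t => by simp [hγdeck])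
      (fun t => snd_ne_zero_of_mem_bdrySigma ha (hγS t))
      fun t t' he => exists_int_eq_add_of_cexp_two_pi_eq (by rwa [hγproj, hγproj] at he)
  have hγper : Periodic γ 2 := fun t => by
    rw [show t + 2 = t + 1 + 1 by ring, hγdeck, hγdeck, neg_neg]
  have hrange : range γ = bdrySigma a := range_eq_bdrySigma hγS hγdeck hγproj
  set s := extend γ k 0
  have hs (t : ℝ) : s (γ t) = k t := hfac.extend_apply 0 t
  have hsq : ∀ p ∈ bdrySigma a, s p ^ 2 = ψ p.1 := by
    rw [← hrange]
    rintro _ ⟨t, rfl⟩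
    rw [hs, hψγ, ← Complex.exp_nat_mul]; push_cast; ring_nf
  have hanti : ∀ p ∈ bdrySigma a, s (p.1, -p.2) = -s p := by
    rw [← hrange]
    rintro _ ⟨t, rfl⟩
    rw [← hγdeck, hs, hs, hk]
  refine ⟨⟨h, hhc, hψγ, by linarith [hstep 0, one_add_one_eq_two (R := ℝ) ▸ hstep 1]⟩, s,
    hrange ▸ hfac.continuousOn_extend two_pos hγc hγper (by fun_prop) 0, hsq, hanti,
    fun Γ hΓ p hp => ⟨?_, by rw [hanti p hp, inv_neg, neg_mul]⟩⟩
  obtain ⟨t, rfl⟩ := hrange ▸ hp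
  refine im_inv_mul_eq_zero_of_eq_sq_mul_conj ?_ ?_
  · rw [hs]; exact norm_exp_ofReal_mul_I _
  · rw [hsq _ hp]; exact hΓ _ (mem_sphere_zero_iff_norm.2 (hγS t).2)

/-- Let ψ be continuous on ∂D with |ψ| = 1 and winding number 2n+1 (odd), and let γ be
a parametrization of ∂Σ_a doubly covering ∂D (γ(t+1) = G(γ t) for the deck map
G(x,y) = (x,-y), with x-projection exp(2πit)). Then: the symmetric lift ψ̃ = ψ∘Π_x has
winding number 2(2n+1) along γ; there exists a continuous antisymmetric square root
ψ^{1/2} of ψ̃ on ∂Σ_a; and for any Γ with Γ = ψΓ̄ on ∂D, the function ψ^{-1/2}·Γ̃ is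
real valued and antisymmetric on ∂Σ_a. -/
theorem half_integer_square_root (a : ℂ) (ha : a ∈ ball (0 : ℂ) 1) (n : ℤ)
    (ψ : ℂ → ℂ) (hψc : ContinuousOn ψ (sphere (0 : ℂ) 1))
    (hψ1 : ∀ x ∈ sphere (0 : ℂ) 1, ‖ψ x‖ = 1)
    (hdeg : ∃ h : ℝ → ℝ, Continuous h ∧
      (∀ t : ℝ, ψ (Complex.exp (2 * Real.pi * Complex.I * t)) = Complex.exp (Complex.I * h t)) ∧
      h 1 - h 0 = 2 * Real.pi * (2 * n + 1))
    (γ : ℝ → ℂ × ℂ) (hγc : Continuous γ) (hγS : ∀ t, γ t ∈ bdrySigma a)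
    (hγdeck : ∀ t, γ (t + 1) = ((γ t).1, -(γ t).2))
    (hγproj : ∀ t, (γ t).1 = Complex.exp (2 * Real.pi * Complex.I * t)) :
    (∃ H : ℝ → ℝ, Continuous H ∧
      (∀ t : ℝ, ψ ((γ t).1) = Complex.exp (Complex.I * H t)) ∧
      H 2 - H 0 = 2 * Real.pi * (2 * (2 * n + 1))) ∧
    ∃ s : ℂ × ℂ → ℂ, ContinuousOn s (bdrySigma a) ∧
      (∀ p ∈ bdrySigma a, (s p) ^ 2 = ψ p.1) ∧
      (∀ p ∈ bdrySigma a, s (p.1, -p.2) = -s p) ∧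
      (∀ Γ : ℂ → ℂ, (∀ x ∈ sphere (0 : ℂ) 1, Γ x = ψ x * (starRingEnd ℂ) (Γ x)) →
        ∀ p ∈ bdrySigma a,
          ((s p)⁻¹ * Γ p.1).im = 0 ∧
          (s (p.1, -p.2))⁻¹ * Γ p.1 = -((s p)⁻¹ * Γ p.1)) :=
  half_integer_square_root_general a ha n ψ hdeg γ hγc hγS hγdeck hγproj
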